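/- For every positive integer N, the function F_N(s) = 2^{2Ns} ∏_{j=1}^{N} [Γ(N+j−1) Γ(s+j−1/2)] / [Γ(j−1/2) Γ(s+j+N−1)] has a simple pole at s = −1/2 with residue h(N); that is, lim_{s→−1/2} (s + 1/2) · F_N(s) = h(N), where h(N) = (2^{−N}/Γ(N)) ∏_{j=1}^{N} [Γ(N+j−1) Γ(j)] / [Γ(j−1/2) Γ(j+N−3/2)]. -/
import Mathlib


open Filter

noncomputable section

/-- `F N s = 2^{2Ns} ∏_{j=1}^{N} Γ(N+j-1)Γ(s+j-1/2) / (Γ(j-1/2)Γ(s+j+N-1))`,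
where `2^{2Ns} = exp(2Ns log 2)`. -/
def F (N : ℕ) (s : ℂ) : ℂ :=
  Complex.exp (2 * (N : ℂ) * s * Real.log 2) *
    ∏ j ∈ Finset.Icc 1 N,
      Complex.Gamma ((N : ℂ) + (j : ℂ) - 1) * Complex.Gamma (s + (j : ℂ) - 1/2) /
        (Complex.Gamma ((j : ℂ) - 1/2) * Complex.Gamma (s + (j : ℂ) + (N : ℂ) - 1))

/-- `h N = (2^{-N}/Γ(N)) ∏_{j=1}^{N} Γ(N+j-1)Γ(j) / (Γ(j-1/2)Γ(j+N-3/2))`. -/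
def hconst (N : ℕ) : ℝ :=
  (2 : ℝ) ^ (-(N : ℝ)) / Real.Gamma (N : ℝ) *
    ∏ j ∈ Finset.Icc 1 N,
      Real.Gamma ((N : ℝ) + (j : ℝ) - 1) * Real.Gamma (j : ℝ) /
        (Real.Gamma ((j : ℝ) - 1/2) * Real.Gamma ((j : ℝ) + (N : ℝ) - 3/2))

lemma ofReal_pos_ne_neg_nat {r : ℝ} (hr : 0 < r) (m : ℕ) : (r : ℂ) ≠ -(m : ℂ) := by
  intro h
  have h2 := congrArg Complex.re h
  simp at h2
  have : (0:ℝ) ≤ (m:ℝ) := by positivity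
  linarith

/-- the regularized function -/
def G (N : ℕ) (s : ℂ) : ℂ :=
  Complex.exp (2 * (N : ℂ) * s * Real.log 2) *
    (Complex.Gamma (N : ℂ) * Complex.Gamma (s + 3/2) /
      (Complex.Gamma (1/2 : ℂ) * Complex.Gamma (s + (N : ℂ)))) *
    ∏ j ∈ Finset.Icc 2 N,
      Complex.Gamma ((N : ℂ) + (j : ℂ) - 1) * Complex.Gamma (s + (j : ℂ) - 1/2) /
        (Complex.Gamma ((j : ℂ) - 1/2) * Complex.Gamma (s + (j : ℂ) + (N : ℂ) - 1))

lemma Icc_split (N : ℕ) (hN : 0 < N) : Finset.Icc 1 N = insert 1 (Finset.Icc 2 N) := by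
  ext x; simp [Finset.mem_Icc]; omega

lemma mul_F_eq (N : ℕ) (hN : 0 < N) {s : ℂ} (hs : s ≠ -(1/2)) :
    (s + 1/2) * F N s = G N s := by
  have h0 : s + 1/2 ≠ 0 := by
    intro h; apply hs; linear_combination h
  have hG1 : Complex.Gamma (s + 3/2) = (s + 1/2) * Complex.Gamma (s + 1/2) := by
    have := Complex.Gamma_add_one (s + 1/2) h0
    rw [← this]; ring_nf
  rw [F, G, Icc_split N hN, Finset.prod_insert (by simp)]
  rw [show ((N:ℂ) + (1:ℕ) - 1) = (N:ℂ) by push_cast; ring,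
      show (s + ((1:ℕ):ℂ) - 1/2) = s + 1/2 by push_cast; ring,
      show (((1:ℕ):ℂ) - 1/2) = 1/2 by push_cast; norm_num,
      show (s + ((1:ℕ):ℂ) + (N:ℂ) - 1) = s + (N:ℂ) by push_cast; ring,
      hG1]
  ring

lemma tele (N : ℕ) (hN : 0 < N) :
    ∏ j ∈ Finset.Icc 2 N, (Real.Gamma (j:ℝ) / Real.Gamma ((j:ℝ) - 1)) = Real.Gamma (N:ℝ) := by
  induction N with
  | zero => omega
  | succ n ih =>
    rcases Nat.eq_zero_or_pos n with h0 | h1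
    · subst h0; simp [Real.Gamma_one]
    · rw [Finset.prod_Icc_succ_top (by omega), ih h1]
      have hne : Real.Gamma (n:ℝ) ≠ 0 :=
        (Real.Gamma_pos_of_pos (by exact_mod_cast h1)).ne'
      push_cast
      rw [show (n:ℝ) + 1 - 1 = (n:ℝ) by ring]
      field_simp

lemma hconst_eq (N : ℕ) (hN : 0 < N) : hconst N =
    Real.exp (-(N:ℝ) * Real.log 2) *
      (Real.Gamma (N:ℝ) * Real.Gamma 1 / (Real.Gamma (1/2) * Real.Gamma ((N:ℝ) - 1/2))) *
    ∏ j ∈ Finset.Icc 2 N,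
      Real.Gamma ((N:ℝ) + (j:ℝ) - 1) * Real.Gamma ((j:ℝ) - 1) /
        (Real.Gamma ((j:ℝ) - 1/2) * Real.Gamma ((j:ℝ) + (N:ℝ) - 3/2)) := by
  have hΓN : Real.Gamma (N:ℝ) ≠ 0 := (Real.Gamma_pos_of_pos (by exact_mod_cast hN)).ne'
  rw [hconst, Icc_split N hN, Finset.prod_insert (by simp)]
  rw [show ((N:ℝ) + ((1:ℕ):ℝ) - 1) = (N:ℝ) by push_cast; ring,
      show (((1:ℕ):ℝ)) = (1:ℝ) by norm_num,
      show ((1:ℝ) - 1/2) = 1/2 by norm_num,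
      show ((1:ℝ) + (N:ℝ) - 3/2) = (N:ℝ) - 1/2 by ring]
  have hterm : ∀ j ∈ Finset.Icc 2 N,
      Real.Gamma ((N:ℝ) + (j:ℝ) - 1) * Real.Gamma (j:ℝ) /
        (Real.Gamma ((j:ℝ) - 1/2) * Real.Gamma ((j:ℝ) + (N:ℝ) - 3/2)) =
      (Real.Gamma (j:ℝ) / Real.Gamma ((j:ℝ) - 1)) *
        (Real.Gamma ((N:ℝ) + (j:ℝ) - 1) * Real.Gamma ((j:ℝ) - 1) /
          (Real.Gamma ((j:ℝ) - 1/2) * Real.Gamma ((j:ℝ) + (N:ℝ) - 3/2))) := by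
    intro j hj
    simp only [Finset.mem_Icc] at hj
    have h2 : (2:ℝ) ≤ (j:ℝ) := by exact_mod_cast hj.1
    have hjm : Real.Gamma ((j:ℝ) - 1) ≠ 0 := (Real.Gamma_pos_of_pos (by linarith)).ne'
    have gen : ∀ (a b c e : ℝ), e ≠ 0 → a * b / c = (b / e) * (a * e / c) := by
      intro a b c e he
      rw [div_mul_div_comm, show b * (a * e) = e * (a * b) by ring,
        mul_div_mul_left _ _ he]
    exact gen _ _ _ _ hjm
  rw [Finset.prod_congr rfl hterm, Finset.prod_mul_distrib, tele N hN]
  rw [Real.rpow_def_of_pos (by norm_num : (0:ℝ) < 2)]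
  rw [show Real.log 2 * (-(N:ℝ)) = -(N:ℝ) * Real.log 2 by ring]
  have key : ∀ (E T g P : ℝ), g ≠ 0 → E / g * (T * (g * P)) = E * T * P := by
    intro E T g P hg; field_simp
  exact key _ _ _ _ hΓN

lemma G_val (N : ℕ) (hN : 0 < N) : G N (-(1/2)) = (hconst N : ℂ) := by
  have hprodeq : ∀ j ∈ Finset.Icc 2 N,
      Complex.Gamma ((N : ℂ) + (j : ℂ) - 1) * Complex.Gamma ((-(1/2):ℂ) + (j : ℂ) - 1/2) /
        (Complex.Gamma ((j : ℂ) - 1/2) * Complex.Gamma ((-(1/2):ℂ) + (j : ℂ) + (N : ℂ) - 1)) =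
      ((Real.Gamma ((N:ℝ) + (j:ℝ) - 1) * Real.Gamma ((j:ℝ) - 1) /
        (Real.Gamma ((j:ℝ) - 1/2) * Real.Gamma ((j:ℝ) + (N:ℝ) - 3/2)) : ℝ) : ℂ) := by
    intro j hj
    rw [show ((N:ℂ) + (j:ℂ) - 1) = (((N:ℝ) + (j:ℝ) - 1 : ℝ) : ℂ) by push_cast; ring,
        show ((-(1/2):ℂ) + (j:ℂ) - 1/2) = (((j:ℝ) - 1 : ℝ) : ℂ) by push_cast; ring,
        show ((j:ℂ) - 1/2) = (((j:ℝ) - 1/2 : ℝ) : ℂ) by push_cast; ring,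
        show ((-(1/2):ℂ) + (j:ℂ) + (N:ℂ) - 1) = (((j:ℝ) + (N:ℝ) - 3/2 : ℝ) : ℂ) by
          push_cast; ring,
        Complex.Gamma_ofReal, Complex.Gamma_ofReal, Complex.Gamma_ofReal,
        Complex.Gamma_ofReal]
    push_cast
    ring
  rw [G, Finset.prod_congr rfl hprodeq, ← Complex.ofReal_prod]
  rw [show (2 * (N : ℂ) * (-(1/2)) * (Real.log 2 : ℂ)) = ((-(N:ℝ) * Real.log 2 : ℝ) : ℂ) by
        push_cast; ring,
      ← Complex.ofReal_exp]
  rw [show ((-(1/2):ℂ) + 3/2) = (((1:ℝ)) : ℂ) by norm_num,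
      show ((-(1/2):ℂ) + (N:ℂ)) = (((N:ℝ) - 1/2 : ℝ) : ℂ) by push_cast; ring,
      show ((N:ℂ)) = (((N:ℝ)) : ℂ) by push_cast; ring,
      show ((1/2 : ℂ)) = (((1/2:ℝ)) : ℂ) by norm_num,
      Complex.Gamma_ofReal, Complex.Gamma_ofReal, Complex.Gamma_ofReal,
      Complex.Gamma_ofReal]
  rw [hconst_eq N hN]
  push_cast
  ring

lemma contGamma (c : ℂ) (r : ℝ) (hr : 0 < r) (hrc : (-(1/2):ℂ) + c = (r : ℂ)) :
    ContinuousAt (fun s : ℂ => Complex.Gamma (s + c)) (-(1/2)) := by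
  have hd : DifferentiableAt ℂ Complex.Gamma ((-(1/2):ℂ) + c) := by
    apply Complex.differentiableAt_Gamma
    intro m
    rw [hrc]
    exact ofReal_pos_ne_neg_nat hr m
  have hf : ContinuousAt (fun s : ℂ => s + c) (-(1/2)) :=
    continuousAt_id.add continuousAt_const
  exact ContinuousAt.comp (x := (-(1/2):ℂ)) (f := fun s : ℂ => s + c) hd.continuousAt hf

lemma G_cont (N : ℕ) (hN : 0 < N) : ContinuousAt (G N) (-(1/2)) := by
  have hN' : (0:ℝ) < (N:ℝ) - 1/2 := by
    have : (1:ℝ) ≤ (N:ℝ) := by exact_mod_cast hN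
    linarith
  apply ContinuousAt.mul
  · apply ContinuousAt.mul
    · exact (Complex.continuous_exp.comp (by continuity)).continuousAt
    · apply ContinuousAt.div
      · exact continuousAt_const.mul (contGamma (3/2) 1 one_pos (by norm_num))
      · exact continuousAt_const.mul (contGamma (N:ℂ) ((N:ℝ) - 1/2) hN' (by push_cast; ring))
      · apply mul_ne_zero
        · rw [show ((1/2:ℂ)) = (((1/2:ℝ)):ℂ) by norm_num]
          exact Complex.Gamma_ne_zero fun m => ofReal_pos_ne_neg_nat one_half_pos m
        · rw [show ((-(1/2):ℂ) + (N:ℂ)) = (((N:ℝ) - 1/2 : ℝ) : ℂ) by push_cast; ring]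
          exact Complex.Gamma_ne_zero fun m => ofReal_pos_ne_neg_nat hN' m
  · apply tendsto_finset_prod
    intro j hj
    simp only [Finset.mem_Icc] at hj
    have h2 : (2:ℝ) ≤ (j:ℝ) := by exact_mod_cast hj.1
    have hjhalf : (0:ℝ) < (j:ℝ) - 1/2 := by linarith
    have hjN : (0:ℝ) < (j:ℝ) + (N:ℝ) - 3/2 := by
      have : (1:ℝ) ≤ (N:ℝ) := by exact_mod_cast hN
      linarith
    have e1 : (fun s : ℂ => Complex.Gamma (s + (j:ℂ) - 1/2)) =
        fun s : ℂ => Complex.Gamma (s + ((j:ℂ) - 1/2)) := by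
      ext s; congr 1; ring
    have e2 : (fun s : ℂ => Complex.Gamma (s + (j:ℂ) + (N:ℂ) - 1)) =
        fun s : ℂ => Complex.Gamma (s + ((j:ℂ) + (N:ℂ) - 1)) := by
      ext s; congr 1; ring
    apply ContinuousAt.div
    · refine continuousAt_const.mul ?_
      rw [e1]
      exact contGamma ((j:ℂ) - 1/2) ((j:ℝ) - 1) (by linarith) (by push_cast; ring)
    · refine continuousAt_const.mul ?_
      rw [e2]
      exact contGamma ((j:ℂ) + (N:ℂ) - 1) ((j:ℝ) + (N:ℝ) - 3/2) hjN (by push_cast; ring)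
    · apply mul_ne_zero
      · rw [show ((j:ℂ) - 1/2) = (((j:ℝ) - 1/2 : ℝ) : ℂ) by push_cast; ring]
        exact Complex.Gamma_ne_zero fun m => ofReal_pos_ne_neg_nat hjhalf m
      · rw [show ((-(1/2):ℂ) + (j:ℂ) + (N:ℂ) - 1) = (((j:ℝ) + (N:ℝ) - 3/2 : ℝ) : ℂ) by
            push_cast; ring]
        exact Complex.Gamma_ne_zero fun m => ofReal_pos_ne_neg_nat hjN m


/-- `F N` has a simple pole at `s = -1/2` with residue `h(N)`; that is,
`(s + 1/2) · F N s → h(N)` as `s → -1/2` (with `s ≠ -1/2`). -/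
theorem F_residue_at_neg_half (N : ℕ) (hN : 0 < N) :
    Tendsto (fun s : ℂ => (s + 1/2) * F N s)
      (nhdsWithin (-(1/2) : ℂ) {(-(1/2) : ℂ)}ᶜ)
      (nhds (hconst N : ℂ)) := by
  have h1 : Tendsto (G N) (nhdsWithin (-(1/2) : ℂ) {(-(1/2) : ℂ)}ᶜ)
      (nhds (hconst N : ℂ)) := by
    rw [← G_val N hN]
    exact (G_cont N hN).continuousWithinAt.tendsto
  refine h1.congr' ?_
  filter_upwards [eventually_mem_nhdsWithin] with s hs
  exact (mul_F_eq N hN (by simpa using hs)).symm
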